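/- For the exponential distribution with β > 0, the probabilities w_n = F(v_n) = 1 - e^{-v_n/β} along the value recurrence v_{n+1} = v_n + β e^{-v_n/β} (v_0 ≥ 0) satisfy n·(1 - w_n) → 1 as n → ∞. -/

import Mathlib

open Filter Real Topology Finset

/-!
Put `b n = exp (v n / β)`. The recurrence becomes `b (n + 1) = b n * exp (b n)⁻¹` and
`1 - w n = (b n)⁻¹`, so the claim is `b n / n → 1`. Since `exp t ≥ 1 + t`, the sequence `b`
grows by at least `1` per step, hence tends to infinity; then its increments
`b n * (exp (b n)⁻¹ - 1)` tend to the derivative of `exp` at `0`, which is `1`, and Cesàro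
averaging gives `b n / n → 1`.
-/

theorem tendsto_mul_exp_inv_sub_one_atTop :
    Tendsto (fun x : ℝ => x * (exp x⁻¹ - 1)) atTop (𝓝 1) := by
  have hslope : Tendsto (fun t : ℝ => t⁻¹ * (exp t - 1)) (𝓝[>] 0) (𝓝 1) := by
    simpa using (hasDerivAt_exp 0).tendsto_slope_zero_right
  exact (hslope.comp tendsto_inv_atTop_nhdsGT_zero).congr fun x => by simp

theorem tendsto_div_natCast_of_tendsto_sub {u : ℕ → ℝ} {l : ℝ}
    (h : Tendsto (fun n => u (n + 1) - u n) atTop (𝓝 l)) :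
    Tendsto (fun n : ℕ => u n / n) atTop (𝓝 l) := by
  have hinit : Tendsto (fun n : ℕ => u 0 / n) atTop (𝓝 0) :=
    tendsto_const_nhds.div_atTop tendsto_natCast_atTop_atTop
  refine (zero_add l ▸ hinit.add h.cesaro).congr fun n => ?_
  rw [sum_range_sub, ← div_eq_inv_mul, ← add_div, add_sub_cancel]

section MulExpInvRecurrence

variable {b : ℕ → ℝ} (hb0 : 0 < b 0) (hrec : ∀ n, b (n + 1) = b n * exp (b n)⁻¹)
include hb0 hrec

theorem mul_exp_inv_recurrence_pos (n : ℕ) : 0 < b n := by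
  induction n with
  | zero => exact hb0
  | succ n ih => rw [hrec]; positivity

theorem mul_exp_inv_recurrence_add_one_le (n : ℕ) : b n + 1 ≤ b (n + 1) := by
  have hpos := mul_exp_inv_recurrence_pos hb0 hrec n
  calc b n + 1 = b n * ((b n)⁻¹ + 1) := by field_simp; ring
    _ ≤ b n * exp (b n)⁻¹ := by gcongr; linarith [add_one_le_exp (b n)⁻¹]
    _ = b (n + 1) := (hrec n).symm

theorem tendsto_mul_exp_inv_recurrence_atTop : Tendsto b atTop atTop := by
  have hgrowth : ∀ n : ℕ, b 0 + n ≤ b n := by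
    intro n
    induction n with
    | zero => simp
    | succ n ih =>
      push_cast
      linarith [mul_exp_inv_recurrence_add_one_le hb0 hrec n]
  exact tendsto_atTop_mono hgrowth (tendsto_atTop_add_const_left _ _ tendsto_natCast_atTop_atTop)

theorem tendsto_mul_exp_inv_recurrence_div_natCast :
    Tendsto (fun n : ℕ => b n / n) atTop (𝓝 1) := by
  refine tendsto_div_natCast_of_tendsto_sub ?_
  refine (tendsto_mul_exp_inv_sub_one_atTop.comp
    (tendsto_mul_exp_inv_recurrence_atTop hb0 hrec)).congr fun n => ?_
  simp only [Function.comp, hrec n]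
  ring

end MulExpInvRecurrence

theorem stmt_12_general (β : ℝ) (hβ : 0 < β) (v w : ℕ → ℝ)
    (hrec : ∀ n, v (n + 1) = v n + β * Real.exp (-(v n) / β))
    (hw : ∀ n, w n = 1 - Real.exp (-(v n) / β)) :
    Tendsto (fun n : ℕ => (n : ℝ) * (1 - w n)) atTop (nhds 1) := by
  set b : ℕ → ℝ := fun n => exp (v n / β) with hb
  have hexp_neg : ∀ n, exp (-(v n) / β) = (b n)⁻¹ := fun n => by rw [neg_div, exp_neg]
  have hbrec : ∀ n, b (n + 1) = b n * exp (b n)⁻¹ := fun n => by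
    simp only [hb, hrec n, hexp_neg, ← exp_add, add_div, mul_div_cancel_left₀ _ hβ.ne']
  have hlim := (tendsto_mul_exp_inv_recurrence_div_natCast (exp_pos _) hbrec).inv₀ one_ne_zero
  rw [inv_one] at hlim
  refine hlim.congr fun n => ?_
  rw [hw, sub_sub_cancel, hexp_neg, inv_div, div_eq_mul_inv]

/-- For the exponential distribution, the probabilities `w_n = 1 - e^{-v_n/β}` along the
value recurrence `v_{n+1} = v_n + β e^{-v_n/β}` (with `v_0 ≥ 0`) satisfy
`n (1 - w_n) → 1`. -/
theorem stmt_12 (β : ℝ) (hβ : 0 < β) (v w : ℕ → ℝ) (hv0 : 0 ≤ v 0)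
    (hrec : ∀ n, v (n + 1) = v n + β * Real.exp (-(v n) / β))
    (hw : ∀ n, w n = 1 - Real.exp (-(v n) / β)) :
    Tendsto (fun n : ℕ => (n : ℝ) * (1 - w n)) atTop (nhds 1) :=
  stmt_12_general β hβ v w hrec hw
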